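/- Let Y ⊂ P^N be a closed irreducible variety, A ⊂ (P^N)^∨ a projective curve of hyperplanes, and A° ⊂ A a nonempty open subset. Assume Y ⊄ H for every H ∈ A. Then Y equals the Zariski closure of the union of the intersections Y ∩ H over H ∈ A°. -/

import Mathlib

open MvPolynomial

noncomputable section

variable {σ : Type*}

/-- The common zero locus of a set of polynomials. -/
def zLocus (I : Set (MvPolynomial σ ℂ)) : Set (σ → ℂ) :=
  {x | ∀ f ∈ I, eval x f = 0}

/-- A set is algebraic if it is a common zero locus of polynomials. -/
def IsAlg (S : Set (σ → ℂ)) : Prop :=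
  ∃ I : Set (MvPolynomial σ ℂ), S = zLocus I

/-- Zariski closure. -/
def zcl (S : Set (σ → ℂ)) : Set (σ → ℂ) :=
  ⋂₀ {T | IsAlg T ∧ S ⊆ T}

/-- Irreducibility of a set with respect to algebraic subsets. -/
def IsIrredV (S : Set (σ → ℂ)) : Prop :=
  S.Nonempty ∧ ∀ T₁ T₂ : Set (σ → ℂ), IsAlg T₁ → IsAlg T₂ →
    S ⊆ T₁ ∪ T₂ → S ⊆ T₁ ∨ S ⊆ T₂

/-- Dimension of (the affine cone over) a variety, via chains of irreducible
algebraic subsets. For the cone over a projective variety this is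
(projective dimension) + 1. -/
def adim (S : Set (σ → ℂ)) : WithBot (WithTop ℕ) :=
  Order.krullDim {T : Set (σ → ℂ) // IsAlg T ∧ IsIrredV T ∧ T ⊆ S}

/-- `S` is (the affine cone over) a projective cone: there is a vertex `v`
such that the line through `v` and any point of `S` stays in `S`. -/
def IsConeV (S : Set (σ → ℂ)) : Prop :=
  ∃ v ∈ S, v ≠ 0 ∧ ∀ x ∈ S, ∀ a b : ℂ, a • v + b • x ∈ S

/-- Secant variety (of cones): closure of the union of lines through pairs of points. -/
def secantV (S : Set (σ → ℂ)) : Set (σ → ℂ) :=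
  zcl {v | ∃ x ∈ S, ∃ y ∈ S, ∃ a b : ℂ, v = a • x + b • y}

/-- The gradient of a polynomial at a point. -/
def gradP [Fintype σ] [DecidableEq σ] (P : MvPolynomial σ ℂ) (v : σ → ℂ) : σ → ℂ :=
  fun i => eval v (pderiv i P)

/-- The singular locus (cone) of the hypersurface defined by `P`. -/
def singLocus [Fintype σ] [DecidableEq σ] (P : MvPolynomial σ ℂ) : Set (σ → ℂ) :=
  {v | ∀ i, eval v (pderiv i P) = 0}

end

/-!
Every point `y` lies on a hyperplane of the curve: the hyperplane `{φ | φ ⬝ᵥ y = 0}` of the dual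
space meets the 2-dimensional cone `A` outside the origin, by a Hilbert function argument. So for
`y ∈ Y` there is `0 ≠ ψ ∈ A` with `ψ ⬝ᵥ y = 0`.
If the line through `ψ` is not contained in `B`, a multiple of `ψ` lies in `A \ B` and `y` lies in
the union of the sections. Otherwise that line lies in `A ∩ B`, a proper algebraic subset of the
curve `A`, which contains only finitely many lines. Hence `Y` is covered by the closure of the
union together with finitely many hyperplanes `φ ⬝ᵥ v = 0`, `0 ≠ φ ∈ A`; as `Y` is irreducible and
lies in none of these hyperplanes, it lies in the closure.
-/

open Set

section AlgebraicSets

variable {σ : Type*}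

theorem isAlg_empty : IsAlg (∅ : Set (σ → ℂ)) :=
  ⟨{1}, by ext; simp [zLocus]⟩

theorem isAlg_singleton (a : σ → ℂ) : IsAlg ({a} : Set (σ → ℂ)) := by
  refine ⟨range fun i => X i - C (a i), ?_⟩
  ext w
  simp [zLocus, sub_eq_zero, funext_iff]

theorem IsAlg.inter {S T : Set (σ → ℂ)} (hS : IsAlg S) (hT : IsAlg T) : IsAlg (S ∩ T) := by
  obtain ⟨I, rfl⟩ := hS
  obtain ⟨J, rfl⟩ := hT
  exact ⟨I ∪ J, by ext; simp [zLocus, or_imp, forall_and]⟩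

theorem IsAlg.union {S T : Set (σ → ℂ)} (hS : IsAlg S) (hT : IsAlg T) : IsAlg (S ∪ T) := by
  obtain ⟨I, rfl⟩ := hS
  obtain ⟨J, rfl⟩ := hT
  refine ⟨image2 (· * ·) I J, Subset.antisymm ?_ fun x hx => ?_⟩
  · rintro x (hx | hx) _ ⟨f, hf, g, hg, rfl⟩
    · simp [hx f hf]
    · simp [hx g hg]
  · by_contra hxIJ
    obtain ⟨hxI, hxJ⟩ := not_or.mp hxIJ
    obtain ⟨f, hf, hfx⟩ : ∃ f ∈ I, eval x f ≠ 0 := by simpa [zLocus] using hxI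
    obtain ⟨g, hg, hgx⟩ : ∃ g ∈ J, eval x g ≠ 0 := by simpa [zLocus] using hxJ
    exact mul_ne_zero hfx hgx (by simpa using hx _ (mem_image2_of_mem hf hg))

theorem isAlg_sInter {𝒯 : Set (Set (σ → ℂ))} (h : ∀ T ∈ 𝒯, IsAlg T) : IsAlg (⋂₀ 𝒯) := by
  choose I hI using h
  refine ⟨⋃ (T) (hT : T ∈ 𝒯), I T hT, ?_⟩
  ext x
  simp only [mem_sInter, zLocus, mem_iUnion, mem_ofPred_eq]
  refine ⟨fun hx f ⟨T, hT, hf⟩ => ?_, fun hx T hT => ?_⟩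
  · exact (hI T hT ▸ hx T hT : x ∈ zLocus (I T hT)) f hf
  · rw [hI T hT]
    exact fun f hf => hx f ⟨T, hT, hf⟩

theorem isAlg_biUnion {ι : Type*} {s : Set ι} (hs : s.Finite) {T : ι → Set (σ → ℂ)}
    (h : ∀ i ∈ s, IsAlg (T i)) : IsAlg (⋃ i ∈ s, T i) := by
  induction s, hs using Set.Finite.induction_on with
  | empty => simpa using isAlg_empty
  | insert _ _ ih =>
    rw [biUnion_insert]
    exact (h _ (mem_insert _ _)).union (ih fun i hi => h i (mem_insert_of_mem _ hi))

theorem isAlg_of_finite {S : Set (σ → ℂ)} (hS : S.Finite) : IsAlg S :=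
  biUnion_of_singleton S ▸ isAlg_biUnion hS fun a _ => isAlg_singleton a

theorem subset_zcl (S : Set (σ → ℂ)) : S ⊆ zcl S :=
  fun _ hx _ hT => hT.2 hx

theorem zcl_subset {S T : Set (σ → ℂ)} (hT : IsAlg T) (h : S ⊆ T) : zcl S ⊆ T :=
  sInter_subset_of_mem ⟨hT, h⟩

theorem isAlg_zcl (S : Set (σ → ℂ)) : IsAlg (zcl S) :=
  isAlg_sInter fun _ hT => hT.1

theorem IsAlg.zeroLocus_vanishingIdeal {S : Set (σ → ℂ)} (hS : IsAlg S) :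
    zeroLocus ℂ (vanishingIdeal ℂ S) = S := by
  obtain ⟨I, rfl⟩ := hS
  exact le_antisymm (fun x hx f hf => hx f fun y hy => hy f hf) (zeroLocus_vanishingIdeal_le _)

theorem vanishingIdeal_strictAnti {S T : Set (σ → ℂ)} (hS : IsAlg S) (hT : IsAlg T)
    (h : S ⊂ T) : vanishingIdeal ℂ T < vanishingIdeal ℂ S := by
  refine (vanishingIdeal_anti_mono h.subset).lt_of_ne fun he => h.ne ?_
  rw [← hS.zeroLocus_vanishingIdeal, ← hT.zeroLocus_vanishingIdeal, he]

theorem IsIrredV.isPrime_vanishingIdeal {S : Set (σ → ℂ)} (hS : IsIrredV S) :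
    (vanishingIdeal ℂ S).IsPrime := by
  refine ⟨fun htop => ?_, fun {f g} hfg => ?_⟩
  · obtain ⟨x, hx⟩ := hS.1
    simpa using (htop ▸ Submodule.mem_top : (1 : MvPolynomial σ ℂ) ∈ vanishingIdeal ℂ S) x hx
  · have hcov : S ⊆ zLocus {f} ∪ zLocus {g} := fun x hx => by
      simpa [zLocus] using hfg x hx
    exact (hS.2 _ _ ⟨{f}, rfl⟩ ⟨{g}, rfl⟩ hcov).imp (fun h x hx => h hx f rfl)
      (fun h x hx => h hx g rfl)

theorem isIrredV_singleton (a : σ → ℂ) : IsIrredV ({a} : Set (σ → ℂ)) :=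
  ⟨singleton_nonempty a, fun _ _ _ _ h => (h rfl).imp singleton_subset_iff.2
    singleton_subset_iff.2⟩

theorem IsIrredV.exists_subset_of_subset_biUnion {S : Set (σ → ℂ)} (hS : IsIrredV S)
    {ι : Type*} {s : Set ι} (hs : s.Finite) {T : ι → Set (σ → ℂ)} (hT : ∀ i ∈ s, IsAlg (T i))
    (h : S ⊆ ⋃ i ∈ s, T i) : ∃ i ∈ s, S ⊆ T i := by
  induction s, hs using Set.Finite.induction_on with
  | empty => simp [subset_empty_iff, hS.1.ne_empty] at h
  | @insert i s _ hs ih =>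
    rw [biUnion_insert] at h
    have hT' : ∀ j ∈ s, IsAlg (T j) := fun j hj => hT j (mem_insert_of_mem _ hj)
    rcases hS.2 _ _ (hT i (mem_insert _ _)) (isAlg_biUnion hs hT') h with h | h
    · exact ⟨i, mem_insert _ _, h⟩
    · obtain ⟨j, hj, hSj⟩ := ih hT' h
      exact ⟨j, mem_insert_of_mem _ hj, hSj⟩

theorem IsIrredV.subsingleton_of_finite {S : Set (σ → ℂ)} (hS : IsIrredV S) (hfin : S.Finite) :
    S.Subsingleton := by
  intro a ha b hb
  by_contra hab
  have hcov : S ⊆ {a} ∪ (S \ {a}) := fun x hx => (em (x = a)).imp id fun h => ⟨hx, h⟩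
  rcases hS.2 _ _ (isAlg_singleton a) (isAlg_of_finite hfin.sdiff) hcov with h | h
  · exact hab (h hb).symm
  · exact (h ha).2 rfl

end AlgebraicSets

section Lines

variable {σ : Type*}

noncomputable def lineRestriction (v : σ → ℂ) (f : MvPolynomial σ ℂ) : Polynomial ℂ :=
  ∑ i ∈ Finset.range (f.totalDegree + 1),
    Polynomial.C (eval v (homogeneousComponent i f)) * Polynomial.X ^ i

theorem coeff_lineRestriction (v : σ → ℂ) (f : MvPolynomial σ ℂ) (j : ℕ) :
    (lineRestriction v f).coeff j = eval v (homogeneousComponent j f) := by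
  simp only [lineRestriction, Polynomial.finsetSum_coeff, Polynomial.coeff_C_mul_X_pow,
    Finset.sum_ite_eq, Finset.mem_range]
  split_ifs with hj
  · rfl
  · rw [homogeneousComponent_eq_zero _ _ (by omega), map_zero]

theorem line_subset_of_cone {A : Set (σ → ℂ)} (hA : ∀ c : ℂ, ∀ φ ∈ A, c • φ ∈ A) {v : σ → ℂ}
    (hv : v ∈ A) : (ℂ ∙ v : Set (σ → ℂ)) ⊆ A := fun w hw => by
  obtain ⟨c, rfl⟩ := Submodule.mem_span_singleton.mp hw
  exact hA c v hv

variable [Fintype σ]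

theorem MvPolynomial.IsHomogeneous.eval_smul {f : MvPolynomial σ ℂ} {n : ℕ}
    (hf : f.IsHomogeneous n) (c : ℂ) (v : σ → ℂ) : eval (c • v) f = c ^ n * eval v f := by
  rw [eval_eq', eval_eq', Finset.mul_sum]
  refine Finset.sum_congr rfl fun d hd => ?_
  have hdeg : ∑ i, d i = n := by
    rw [← Finsupp.degree_eq_sum]
    by_contra h
    exact mem_support_iff.mp hd (hf.coeff_eq_zero h)
  simp only [Pi.smul_apply, smul_eq_mul, mul_pow, Finset.prod_mul_distrib,
    Finset.prod_pow_eq_pow_sum, hdeg]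
  ring

theorem eval_lineRestriction (v : σ → ℂ) (f : MvPolynomial σ ℂ) (c : ℂ) :
    (lineRestriction v f).eval c = eval (c • v) f := by
  conv_rhs => rw [← sum_homogeneousComponent f]
  simp only [lineRestriction, Polynomial.eval_finsetSum, Polynomial.eval_mul, Polynomial.eval_C,
    Polynomial.eval_pow, Polynomial.eval_X, map_sum,
    (homogeneousComponent_isHomogeneous _ _).eval_smul, mul_comm]

theorem homogeneousComponent_mem_vanishingIdeal {S : Set (σ → ℂ)}
    (hS : ∀ c : ℂ, ∀ v ∈ S, c • v ∈ S) ⦃f : MvPolynomial σ ℂ⦄ (hf : f ∈ vanishingIdeal ℂ S)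
    (j : ℕ) : homogeneousComponent j f ∈ vanishingIdeal ℂ S := by
  intro v hv
  have h : lineRestriction v f = 0 :=
    Polynomial.funext fun c => by simpa [eval_lineRestriction] using hf _ (hS c v hv)
  simpa [coeff_lineRestriction] using congrArg (Polynomial.coeff · j) h

theorem line_subset_or_finite {T : Set (σ → ℂ)} (hT : IsAlg T) (v : σ → ℂ) :
    (ℂ ∙ v : Set (σ → ℂ)) ⊆ T ∨ {c : ℂ | c • v ∈ T}.Finite := by
  obtain ⟨I, rfl⟩ := hT
  by_cases h : ∃ f ∈ I, lineRestriction v f ≠ 0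
  · right
    obtain ⟨f, hf, hf0⟩ := h
    refine (Polynomial.finite_setOfPred_isRoot hf0).subset fun c hc => ?_
    rw [mem_ofPred_eq, Polynomial.IsRoot, eval_lineRestriction]
    exact hc f hf
  · left
    intro w hw f hf
    obtain ⟨c, rfl⟩ := Submodule.mem_span_singleton.mp hw
    rw [← eval_lineRestriction, not_not.mp fun h' => h ⟨f, hf, h'⟩, Polynomial.eval_zero]

theorem exists_smul_notMem_of_not_line_subset {T : Set (σ → ℂ)} (hT : IsAlg T) {v : σ → ℂ}
    (h : ¬ (ℂ ∙ v : Set (σ → ℂ)) ⊆ T) : ∃ c : ℂ, c ≠ 0 ∧ c • v ∉ T := by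
  have hfin := ((line_subset_or_finite hT v).resolve_left h).union (finite_singleton 0)
  obtain ⟨c, hc⟩ := hfin.exists_notMem
  simp only [mem_union, mem_ofPred_eq, mem_singleton_iff, not_or] at hc
  exact ⟨c, hc.2, hc.1⟩

theorem isAlg_line (v : σ → ℂ) : IsAlg (ℂ ∙ v : Set (σ → ℂ)) := by
  by_cases hv : v = 0
  · simpa [hv] using isAlg_singleton (0 : σ → ℂ)
  obtain ⟨k, hk : v k ≠ 0⟩ := Function.ne_iff.mp hv
  refine ⟨range fun ij : σ × σ => C (v ij.2) * X ij.1 - C (v ij.1) * X ij.2, ?_⟩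
  ext w
  constructor
  · intro hw
    obtain ⟨c, rfl⟩ := Submodule.mem_span_singleton.mp hw
    rintro _ ⟨⟨i, j⟩, rfl⟩
    simp only [map_sub, map_mul, eval_C, eval_X, Pi.smul_apply, smul_eq_mul]
    ring
  · intro hw
    refine Submodule.mem_span_singleton.mpr ⟨w k / v k, funext fun i => ?_⟩
    have h := hw _ ⟨(i, k), rfl⟩
    simp only [map_sub, map_mul, eval_C, eval_X] at h
    simp only [Pi.smul_apply, smul_eq_mul]
    field_simp
    linear_combination -h

theorem isIrredV_line (v : σ → ℂ) : IsIrredV (ℂ ∙ v : Set (σ → ℂ)) := by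
  refine ⟨⟨v, Submodule.mem_span_singleton_self v⟩, fun T₁ T₂ h₁ h₂ hsub => ?_⟩
  refine (line_subset_or_finite h₁ v).elim Or.inl fun hf₁ =>
    (line_subset_or_finite h₂ v).elim Or.inr fun hf₂ => absurd ?_ (infinite_univ (α := ℂ))
  exact (hf₁.union hf₂).subset fun c _ => hsub (Submodule.mem_span_singleton.mpr ⟨c, rfl⟩)

theorem IsIrredV.eq_line {S : Set (σ → ℂ)} (hirr : IsIrredV S) (hS : IsAlg S) {v : σ → ℂ}
    (hSv : S ⊆ ℂ ∙ v) (hnt : S.Nontrivial) : S = ℂ ∙ v := by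
  refine hSv.antisymm ((line_subset_or_finite hS v).resolve_right fun hfin => ?_)
  refine hnt.not_subsingleton (hirr.subsingleton_of_finite ((hfin.image (· • v)).subset ?_))
  intro x hx
  obtain ⟨c, rfl⟩ := Submodule.mem_span_singleton.mp (hSv hx)
  exact ⟨c, hx, rfl⟩

end Lines

section HilbertFunction

variable {σ : Type*}

theorem MvPolynomial.IsHomogeneous.mem_span_X_pow {f : MvPolynomial σ ℂ} {d : ℕ}
    (hf : f.IsHomogeneous d) : f ∈ Ideal.span (range X) ^ d :=
  (Ideal.mem_span_pow_iff_exists_isHomogeneous _ _).mpr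
    ⟨map C f, hf.map C, by rw [eval_map, eval₂_eta]⟩

theorem homogeneousComponent_add_mul {ℓ : MvPolynomial σ ℂ} {m : ℕ} (hℓ : ℓ.IsHomogeneous m)
    (b : MvPolynomial σ ℂ) (d : ℕ) :
    homogeneousComponent (d + m) (b * ℓ) = homogeneousComponent d b * ℓ := by
  conv_lhs => rw [← sum_homogeneousComponent b, Finset.sum_mul, map_sum]
  have hj : ∀ j, homogeneousComponent (d + m) (homogeneousComponent j b * ℓ)
      = if d = j then homogeneousComponent j b * ℓ else 0 := fun j => by
    rw [homogeneousComponent_of_mem ((homogeneousComponent_isHomogeneous j b).mul hℓ)]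
    exact if_congr (by omega) rfl rfl
  rw [Finset.sum_congr rfl fun j _ => hj j, Finset.sum_ite_eq]
  split_ifs with hd
  · rfl
  · rw [homogeneousComponent_eq_zero _ _ (by simpa using hd), zero_mul]

theorem exists_isHomogeneous_mem_notMem {p q : Ideal (MvPolynomial σ ℂ)}
    (hq : ∀ f ∈ q, ∀ j, homogeneousComponent j f ∈ q) (hqp : ¬ q ≤ p) :
    ∃ e f, f.IsHomogeneous e ∧ f ∈ q ∧ f ∉ p := by
  obtain ⟨g, hgq, hgp⟩ := SetLike.not_le_iff_exists.mp hqp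
  by_contra! h
  exact hgp (sum_homogeneousComponent g ▸ Ideal.sum_mem _ fun j _ =>
    h j _ (homogeneousComponent_isHomogeneous j g) (hq g hgq j))

variable [Fintype σ] (p : Ideal (MvPolynomial σ ℂ))

noncomputable def gradedPiece (d : ℕ) : Submodule ℂ (MvPolynomial σ ℂ ⧸ p) :=
  (homogeneousSubmodule σ ℂ d).map (Ideal.Quotient.mkₐ ℂ p).toLinearMap

instance (d : ℕ) : FiniteDimensional ℂ (gradedPiece p d) :=
  Module.Finite.iff_fg.mpr ((homogeneousSubmodule_fg σ ℂ d).map _)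

noncomputable def hilbertFn (d : ℕ) : ℕ :=
  Module.finrank ℂ (gradedPiece p d)

theorem hilbertFn_add_le (hp : ∀ f ∈ p, ∀ j, homogeneousComponent j f ∈ p)
    {ℓ : MvPolynomial σ ℂ} {m : ℕ} (hℓ : ℓ.IsHomogeneous m) {d : ℕ}
    (hd : ∀ f : MvPolynomial σ ℂ, f.IsHomogeneous (d + m) → f ∈ p ⊔ Ideal.span {ℓ}) :
    hilbertFn p (d + m) ≤ hilbertFn p d := by
  have hsub : gradedPiece p (d + m) ≤
      (gradedPiece p d).map (LinearMap.mulLeft ℂ (Ideal.Quotient.mk p ℓ)) := by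
    rintro _ ⟨f, hf, rfl⟩
    obtain ⟨a, ha, _, hr, hfa⟩ := Submodule.mem_sup.mp (hd f hf)
    obtain ⟨b, rfl⟩ := Ideal.mem_span_singleton'.mp hr
    have key : f = homogeneousComponent (d + m) a + homogeneousComponent d b * ℓ := by
      rw [← homogeneousComponent_add_mul hℓ, ← map_add, hfa,
        homogeneousComponent_of_mem hf, if_pos rfl]
    refine ⟨_, ⟨homogeneousComponent d b, homogeneousComponent_mem d b, rfl⟩, ?_⟩
    simp only [LinearMap.mulLeft_apply, AlgHom.toLinearMap_apply, Ideal.Quotient.mkₐ_eq_mk]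
    rw [key, map_add, (Ideal.Quotient.eq_zero_iff_mem).mpr (hp a ha _), zero_add, map_mul,
      mul_comm]
  exact (Submodule.finrank_mono hsub).trans (Submodule.finrank_map_le _ _)

theorem hilbertFn_lt_add [p.IsPrime] {q : Ideal (MvPolynomial σ ℂ)} (hq : q.IsPrime)
    (hpq : p ≤ q) {i : σ} (hXq : X i ∉ q) {f : MvPolynomial σ ℂ} {e : ℕ}
    (hf : f.IsHomogeneous e) (hfq : f ∈ q) (hfp : f ∉ p) (d : ℕ) :
    hilbertFn p d < hilbertFn p (d + e) := by
  set V := (q.map (Ideal.Quotient.mk p)).restrictScalars ℂ ⊓ gradedPiece p (d + e)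
  have hinj : Function.Injective (LinearMap.mulLeft ℂ (Ideal.Quotient.mk p f)) :=
    mul_right_injective₀ (by rwa [Ne, Ideal.Quotient.eq_zero_iff_mem])
  have hle : (gradedPiece p d).map (LinearMap.mulLeft ℂ (Ideal.Quotient.mk p f)) ≤ V := by
    rintro _ ⟨_, ⟨g, hg, rfl⟩, rfl⟩
    refine ⟨Ideal.mem_map_of_mem _ (q.mul_mem_right g hfq), f * g, ?_, rfl⟩
    simpa [add_comm] using hf.mul hg
  have hlt : V < gradedPiece p (d + e) := by
    refine SetLike.lt_iff_le_and_exists.mpr ⟨inf_le_right, _,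
      Submodule.mem_map_of_mem (isHomogeneous_X_pow i (d + e)), fun h => hXq ?_⟩
    exact hq.mem_of_pow_mem _ ((Ideal.mem_quotient_iff_mem hpq).mp h.1)
  have : FiniteDimensional ℂ V := Submodule.finiteDimensional_of_le inf_le_right
  calc hilbertFn p d
      = Module.finrank ℂ ((gradedPiece p d).map (LinearMap.mulLeft ℂ (Ideal.Quotient.mk p f))) :=
        (Submodule.equivMapOfInjective _ hinj _).finrank_eq
    _ ≤ Module.finrank ℂ V := Submodule.finrank_mono hle
    _ < hilbertFn p (d + e) := Submodule.finrank_lt_finrank_of_lt hlt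

end HilbertFunction

section Cones

variable {σ : Type*} [Fintype σ]

theorem exists_pow_span_X_le {A : Set (σ → ℂ)} (hA : IsAlg A) {ℓ : MvPolynomial σ ℂ}
    (h : ∀ φ ∈ A, eval φ ℓ = 0 → φ = 0) :
    ∃ D, Ideal.span (range X) ^ D ≤ vanishingIdeal ℂ A ⊔ Ideal.span {ℓ} := by
  refine Ideal.exists_pow_le_of_le_radical_of_fg ?_ (Submodule.fg_span (finite_range X))
  rw [← vanishingIdeal_zeroLocus_eq_radical (K := ℂ), Ideal.span_le]
  rintro _ ⟨i, rfl⟩ x hx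
  have hxA : x ∈ A := hA.zeroLocus_vanishingIdeal ▸ zeroLocus_anti_mono le_sup_left hx
  have hx0 := h x hxA (hx ℓ (Ideal.mem_sup_right (Ideal.mem_span_singleton_self ℓ)))
  simp [hx0]

/-- If `A ∩ {ℓ = 0} = {0}`, a power of the irrelevant ideal lies in `I(A) + (ℓ)`, so multiplication
by `ℓ` makes the Hilbert function of `I(A)` non-increasing from some degree `D` on. But
multiplication by a form of degree `e` vanishing on `L` and not on `A` makes it strictly increase
from `d` to `d + e`. -/
theorem exists_ne_zero_eval_eq_zero_of_ssubset {A L : Set (σ → ℂ)} (hA : IsAlg A)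
    (hAirr : IsIrredV A) (hAcone : ∀ c : ℂ, ∀ φ ∈ A, c • φ ∈ A) (hL : IsAlg L)
    (hLirr : IsIrredV L) (hLcone : ∀ c : ℂ, ∀ φ ∈ L, c • φ ∈ L) (hLA : L ⊂ A) {v : σ → ℂ}
    (hvL : v ∈ L) (hv : v ≠ 0) {ℓ : MvPolynomial σ ℂ} (hℓ : ℓ.IsHomogeneous 1) :
    ∃ φ ∈ A, φ ≠ 0 ∧ eval φ ℓ = 0 := by
  by_contra! h
  set p := vanishingIdeal ℂ A
  have := hAirr.isPrime_vanishingIdeal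
  obtain ⟨D, hD⟩ := exists_pow_span_X_le hA fun φ hφ hφℓ => not_not.mp fun h0 => h φ hφ h0 hφℓ
  obtain ⟨e, f, hf, hfL, hfA⟩ := exists_isHomogeneous_mem_notMem
    (homogeneousComponent_mem_vanishingIdeal hLcone) (vanishingIdeal_strictAnti hL hA hLA).not_ge
  obtain ⟨i, hi : v i ≠ 0⟩ := Function.ne_iff.mp hv
  have hXi : X i ∉ vanishingIdeal ℂ L := fun hX => hi (by simpa using hX v hvL)
  have hdesc : ∀ k, hilbertFn p (D + k) ≤ hilbertFn p D := by
    intro k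
    induction k with
    | zero => rfl
    | succ k ih =>
      exact (hilbertFn_add_le _ (homogeneousComponent_mem_vanishingIdeal hAcone) hℓ (d := D + k)
        fun g hg => hD (Ideal.pow_le_pow_right (by omega) hg.mem_span_X_pow)).trans ih
  exact (hdesc e).not_gt (hilbertFn_lt_add _ hLirr.isPrime_vanishingIdeal
    (vanishingIdeal_anti_mono hLA.subset) hXi hf hfL hfA D)

end Cones

theorem exists_lt_lt_of_two_le_krullDim {α : Type*} [Preorder α] (h : 2 ≤ Order.krullDim α) :
    ∃ a b c : α, a < b ∧ b < c := by
  obtain ⟨l, hl⟩ := (Order.le_krullDim_iff (n := 2)).mp h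
  exact ⟨l ⟨0, by omega⟩, l ⟨1, by omega⟩, l ⟨2, by omega⟩,
    l.strictMono (by simp [Fin.lt_def]), l.strictMono (by simp [Fin.lt_def])⟩

theorem not_lt_lt_lt_of_krullDim_le_two {α : Type*} [Preorder α] (h : Order.krullDim α ≤ 2)
    {a b c d : α} (hab : a < b) (hbc : b < c) (hcd : c < d) : False := by
  let l : LTSeries α := LTSeries.mk 3 ![a, b, c, d]
    (Fin.strictMono_iff_lt_succ.mpr fun i => by fin_cases i <;> assumption)
  have := (Order.LTSeries.length_le_krullDim l).trans h
  norm_num [l] at this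

section Dimension

variable {σ : Type*} [Fintype σ]

theorem exists_line_ssubset_of_adim_eq_two {A : Set (σ → ℂ)}
    (hAcone : ∀ c : ℂ, ∀ φ ∈ A, c • φ ∈ A) (hAdim : adim A = 2) :
    ∃ v : σ → ℂ, v ≠ 0 ∧ (ℂ ∙ v : Set (σ → ℂ)) ⊂ A := by
  obtain ⟨⟨T₀, hT₀⟩, ⟨T₁, hT₁alg, hT₁irr, hT₁A⟩, ⟨T₂, _, _, hT₂A⟩, h₀₁, h₁₂⟩ :=
    exists_lt_lt_of_two_le_krullDim hAdim.ge
  have h₀₁ : T₀ ⊂ T₁ := h₀₁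
  have h₁₂ : T₁ ⊂ T₂ := h₁₂
  obtain ⟨a, ha⟩ := hT₀.2.1.1
  obtain ⟨b, hb, hba⟩ := exists_of_ssubset h₀₁
  have hnt : T₁.Nontrivial := ⟨a, h₀₁.subset ha, b, hb, fun h => hba (h ▸ ha)⟩
  obtain ⟨v, hvT₁, hv⟩ := hnt.exists_ne 0
  have hvA := line_subset_of_cone hAcone (hT₁A hvT₁)
  refine ⟨v, hv, hvA.ssubset_of_ne fun hvA' => h₁₂.not_subset ?_⟩
  rw [hT₁irr.eq_line hT₁alg (hvA' ▸ hT₁A) hnt, hvA']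
  exact hT₂A

theorem eq_line_of_line_subset_of_ssubset {A T : Set (σ → ℂ)} (hA : IsAlg A) (hAirr : IsIrredV A)
    (hAdim : adim A = 2) (hT : IsAlg T) (hTirr : IsIrredV T) (hTA : T ⊂ A) {ψ : σ → ℂ}
    (hψ : ψ ≠ 0) (hψT : (ℂ ∙ ψ : Set (σ → ℂ)) ⊆ T) : T = ℂ ∙ ψ := by
  by_contra hne
  have hψ_line : ({ψ} : Set (σ → ℂ)) ⊂ ℂ ∙ ψ :=
    ssubset_iff_subset_ne.mpr ⟨singleton_subset_iff.mpr (Submodule.mem_span_singleton_self ψ),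
      fun h => hψ (h ▸ (ℂ ∙ ψ).zero_mem : (0 : σ → ℂ) ∈ ({ψ} : Set _)).symm⟩
  exact not_lt_lt_lt_of_krullDim_le_two hAdim.le
    (a := ⟨{ψ}, isAlg_singleton ψ, isIrredV_singleton ψ, singleton_subset_iff.mpr
      (hTA.subset (hψT (Submodule.mem_span_singleton_self ψ)))⟩)
    (b := ⟨ℂ ∙ ψ, isAlg_line ψ, isIrredV_line ψ, hψT.trans hTA.subset⟩)
    (c := ⟨T, hT, hTirr, hTA.subset⟩) (d := ⟨A, hA, hAirr, subset_rfl⟩)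
    hψ_line (hψT.ssubset_of_ne (Ne.symm hne)) hTA

end Dimension

section Curves

variable {σ : Type*} [Fintype σ]

noncomputable def linearForm (y : σ → ℂ) : MvPolynomial σ ℂ :=
  ∑ i, C (y i) * X i

theorem eval_linearForm (y x : σ → ℂ) : eval x (linearForm y) = y ⬝ᵥ x := by
  simp [linearForm, dotProduct]

theorem isHomogeneous_linearForm (y : σ → ℂ) : (linearForm y).IsHomogeneous 1 :=
  IsHomogeneous.sum _ _ _ fun _ _ => isHomogeneous_C_mul_X _ _

theorem isAlg_setOf_dotProduct_eq_zero (φ : σ → ℂ) : IsAlg {v : σ → ℂ | φ ⬝ᵥ v = 0} :=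
  ⟨{linearForm φ}, by ext; simp [zLocus, eval_linearForm]⟩

theorem exists_mem_ne_zero_dotProduct_eq_zero {A : Set (σ → ℂ)} (hA : IsAlg A)
    (hAirr : IsIrredV A) (hAcone : ∀ c : ℂ, ∀ φ ∈ A, c • φ ∈ A) (hAdim : adim A = 2)
    (y : σ → ℂ) : ∃ φ ∈ A, φ ≠ 0 ∧ φ ⬝ᵥ y = 0 := by
  obtain ⟨v, hv, hvA⟩ := exists_line_ssubset_of_adim_eq_two hAcone hAdim
  obtain ⟨φ, hφA, hφ, hφy⟩ := exists_ne_zero_eval_eq_zero_of_ssubset hA hAirr hAcone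
    (isAlg_line v) (isIrredV_line v) (fun c _ => Submodule.smul_mem _ c) hvA
    (Submodule.mem_span_singleton_self v) hv (isHomogeneous_linearForm y)
  exact ⟨φ, hφA, hφ, by rwa [eval_linearForm, dotProduct_comm] at hφy⟩

@[elab_as_elim]
theorem IsAlg.induction {P : Set (σ → ℂ) → Prop}
    (ih : ∀ S, IsAlg S → (∀ T, IsAlg T → T ⊂ S → P T) → P S) {S : Set (σ → ℂ)} (hS : IsAlg S) :
    P S := by
  induction h : vanishingIdeal ℂ S using WellFoundedGT.induction generalizing S with
  | _ I IH =>
    exact ih S hS fun T hT hTS => IH _ (h ▸ vanishingIdeal_strictAnti hT hS hTS) hT rfl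

theorem IsAlg.exists_finite_isIrredV_cover {S : Set (σ → ℂ)} (hS : IsAlg S) :
    ∃ 𝒯 : Set (Set (σ → ℂ)), 𝒯.Finite ∧ (∀ T ∈ 𝒯, IsAlg T ∧ IsIrredV T) ∧ S = ⋃ T ∈ 𝒯, T := by
  refine IsAlg.induction (fun S hS IH => ?_) hS
  by_cases hirr : IsIrredV S
  · exact ⟨{S}, finite_singleton S, by simp [hS, hirr], by simp⟩
  by_cases hemp : S = ∅
  · exact ⟨∅, finite_empty, by simp, by simp [hemp]⟩
  obtain ⟨T₁, T₂, h₁, h₂, hsub, hn₁, hn₂⟩ : ∃ T₁ T₂, IsAlg T₁ ∧ IsAlg T₂ ∧ S ⊆ T₁ ∪ T₂ ∧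
      ¬ S ⊆ T₁ ∧ ¬ S ⊆ T₂ := by
    simpa [IsIrredV, nonempty_iff_ne_empty.mpr hemp] using hirr
  obtain ⟨𝒯₁, hf₁, hi₁, he₁⟩ := IH _ (hS.inter h₁) (inter_ssubset_left_iff.mpr hn₁)
  obtain ⟨𝒯₂, hf₂, hi₂, he₂⟩ := IH _ (hS.inter h₂) (inter_ssubset_left_iff.mpr hn₂)
  refine ⟨𝒯₁ ∪ 𝒯₂, hf₁.union hf₂, fun T hT => hT.elim (hi₁ T) (hi₂ T), ?_⟩
  rw [biUnion_union, ← he₁, ← he₂, ← inter_union_distrib_left, inter_eq_left.mpr hsub]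

/-- Every line through the origin contained in `D` is an irreducible component of `D`: a component
strictly between the line and `A` would give a chain of length 3 in `A`. -/
theorem exists_finite_meeting_lines_subset {A D : Set (σ → ℂ)} (hA : IsAlg A) (hAirr : IsIrredV A)
    (hAdim : adim A = 2) (hD : IsAlg D) (hDA : D ⊆ A) (hAD : ¬ A ⊆ D) :
    ∃ F : Set (σ → ℂ), F.Finite ∧ F ⊆ D \ {0} ∧
      ∀ ψ ≠ 0, (ℂ ∙ ψ : Set (σ → ℂ)) ⊆ D → ∃ φ ∈ F, φ ∈ ℂ ∙ ψ := by
  obtain ⟨𝒯, h𝒯, h𝒯irr, hD𝒯⟩ := hD.exists_finite_isIrredV_cover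
  have hpick : ∀ T ∈ {T ∈ 𝒯 | ∃ φ ∈ T, φ ≠ 0}, ∃ φ ∈ T, φ ≠ 0 := fun T hT => hT.2
  choose! pick hpick hpick0 using hpick
  refine ⟨pick '' {T ∈ 𝒯 | ∃ φ ∈ T, φ ≠ 0}, (h𝒯.subset fun T hT => hT.1).image pick, ?_, ?_⟩
  · rintro _ ⟨T, hT, rfl⟩
    exact ⟨hD𝒯 ▸ mem_biUnion hT.1 (hpick T hT), hpick0 T hT⟩
  · intro ψ hψ hψD
    obtain ⟨T, hT, hψT⟩ := (isIrredV_line ψ).exists_subset_of_subset_biUnion h𝒯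
      (fun T hT => (h𝒯irr T hT).1) (hD𝒯 ▸ hψD)
    have hTD : T ⊆ D := hD𝒯 ▸ subset_biUnion_of_mem (u := fun T => T) hT
    have hTA : T ⊂ A := ssubset_iff_subset_ne.mpr ⟨hTD.trans hDA, fun h => hAD (h ▸ hTD)⟩
    have hT' : T ∈ {T ∈ 𝒯 | ∃ φ ∈ T, φ ≠ 0} :=
      ⟨hT, ψ, hψT (Submodule.mem_span_singleton_self ψ), hψ⟩
    refine ⟨pick T, mem_image_of_mem pick hT', ?_⟩
    rw [← SetLike.mem_coe, ← eq_line_of_line_subset_of_ssubset hA hAirr hAdim (h𝒯irr T hT).1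
      (h𝒯irr T hT).2 hTA hψ hψT]
    exact hpick T hT'

end Curves

theorem stmt13_general {N : ℕ} (Y A B : Set (Fin (N + 1) → ℂ))
    (hY : IsAlg Y) (hYirr : IsIrredV Y)
    (hA : IsAlg A) (hAirr : IsIrredV A) (hAcone : ∀ c : ℂ, ∀ φ ∈ A, c • φ ∈ A)
    (hAdim : adim A = 2)
    (hB : IsAlg B) (hAB : ¬ A ⊆ B)
    (hnot : ∀ φ ∈ A, φ ≠ 0 → ¬ Y ⊆ {v | ∑ i, φ i * v i = 0}) :
    Y = zcl {v | v ∈ Y ∧ ∃ φ ∈ A, φ ∉ B ∧ φ ≠ 0 ∧ ∑ i, φ i * v i = 0} := by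
  set S := {v | v ∈ Y ∧ ∃ φ ∈ A, φ ∉ B ∧ φ ≠ 0 ∧ ∑ i, φ i * v i = 0}
  refine (zcl_subset hY fun v hv => hv.1).antisymm' ?_
  obtain ⟨F, hF, hFAB, hFline⟩ := exists_finite_meeting_lines_subset hA hAirr hAdim (hA.inter hB)
    inter_subset_left fun h => hAB (h.trans inter_subset_right)
  have hcover : Y ⊆ zcl S ∪ ⋃ φ ∈ F, {v | φ ⬝ᵥ v = 0} := by
    intro y hy
    obtain ⟨ψ, hψA, hψ, hψy⟩ := exists_mem_ne_zero_dotProduct_eq_zero hA hAirr hAcone hAdim y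
    have hline : ∀ φ ∈ ℂ ∙ ψ, φ ⬝ᵥ y = 0 := fun φ hφ => by
      obtain ⟨c, rfl⟩ := Submodule.mem_span_singleton.mp hφ
      rw [smul_dotProduct, hψy, smul_zero]
    by_cases hψB : (ℂ ∙ ψ : Set (Fin (N + 1) → ℂ)) ⊆ B
    · obtain ⟨φ, hφF, hφψ⟩ := hFline ψ hψ (subset_inter (line_subset_of_cone hAcone hψA) hψB)
      exact Or.inr (mem_biUnion hφF (hline φ hφψ))
    · obtain ⟨c, hc, hcB⟩ := exists_smul_notMem_of_not_line_subset hB hψB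
      exact Or.inl (subset_zcl S ⟨hy, c • ψ, hAcone c ψ hψA, hcB, smul_ne_zero hc hψ,
        hline _ (Submodule.smul_mem _ c (Submodule.mem_span_singleton_self ψ))⟩)
  obtain hYS | hYF := hYirr.2 _ _ (isAlg_zcl S)
    (isAlg_biUnion hF fun φ _ => isAlg_setOf_dotProduct_eq_zero φ) hcover
  · exact hYS
  · obtain ⟨φ, hφF, hYφ⟩ := hYirr.exists_subset_of_subset_biUnion hF
      (fun φ _ => isAlg_setOf_dotProduct_eq_zero φ) hYF
    exact absurd hYφ (hnot φ (hFAB hφF).1.1 (hFAB hφF).2)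

/-- let `Y ⊂ ℙ^N` be a closed irreducible variety, `A` a curve of
hyperplanes in the dual projective space (an irreducible algebraic cone of
affine dimension 2 in the dual `ℂ^{N+1}`), and `A° = A \ B` a nonempty open
subset of `A`.  If `Y ⊄ H` for every hyperplane `H ∈ A`, then `Y` is the
Zariski closure of the union of the sections `Y ∩ H`, `H ∈ A°`. -/
theorem stmt13 {N : ℕ} (Y A B : Set (Fin (N + 1) → ℂ))
    (hY : IsAlg Y) (hYirr : IsIrredV Y) (hYcone : ∀ c : ℂ, ∀ v ∈ Y, c • v ∈ Y)
    (hA : IsAlg A) (hAirr : IsIrredV A) (hAcone : ∀ c : ℂ, ∀ φ ∈ A, c • φ ∈ A)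
    (hAdim : adim A = 2)
    (hB : IsAlg B) (hAB : ¬ A ⊆ B)
    (hnot : ∀ φ ∈ A, φ ≠ 0 → ¬ Y ⊆ {v | ∑ i, φ i * v i = 0}) :
    Y = zcl {v | v ∈ Y ∧ ∃ φ ∈ A, φ ∉ B ∧ φ ≠ 0 ∧ ∑ i, φ i * v i = 0} :=
  stmt13_general Y A B hY hYirr hA hAirr hAcone hAdim hB hAB hnot
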